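/- For all real x and y, the Goldstein-Price function f(x,y) ≥ 3, with equality if and only if (x,y) = (0,-1); in particular f(0,-1) = 3 is the global minimum. -/

import Mathlib

/-! In the coordinates `u = x + y`, `v = 2x - 3y` the two factors of the Goldstein–Price function
become `1 + (u + 1)² (3u² - 14u + 19)` and `3 + (v - 3)² (3v² + 2v + 3)`, where both quadratics are
positive definite. So the first factor is at least `1`, with equality only at `u = -1`, and the
second is at least `3`, with equality only at `v = 3`; the product is therefore at least `3`, with
equality only where `x + y = -1` and `2x - 3y = 3`, i.e. at `(0, -1)`. -/

noncomputable def goldsteinPrice (x y : ℝ) : ℝ :=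
  (1 + (x + y + 1)^2 * (19 - 14*x + 3*x^2 - 14*y + 6*x*y + 3*y^2)) *
  (30 + (2*x - 3*y)^2 * (18 - 32*x + 12*x^2 + 48*y - 36*x*y + 27*y^2))

section OrderedField

variable {K : Type*} [Field K] [LinearOrder K] [IsStrictOrderedRing K]

lemma le_add_sq_mul (c t : K) {q : K} (hq : 0 ≤ q) : c ≤ c + t ^ 2 * q :=
  le_add_of_nonneg_right (by positivity)

lemma add_sq_mul_eq_self_iff {c t q : K} (hq : 0 < q) : c + t ^ 2 * q = c ↔ t = 0 := by
  simp [hq.ne']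

lemma mul_eq_iff_of_one_le_of_le {a b c : K} (ha : 1 ≤ a) (hc : 0 < c) (hb : c ≤ b) :
    a * b = c ↔ a = 1 ∧ b = c := by
  constructor
  · intro h
    have ha1 : a = 1 := by nlinarith
    exact ⟨ha1, by simpa [ha1] using h⟩
  · rintro ⟨rfl, rfl⟩
    exact one_mul _

end OrderedField

lemma goldsteinPrice_eq_mul (x y : ℝ) :
    goldsteinPrice x y =
      (1 + (x + y + 1) ^ 2 * (3 * (x + y) ^ 2 - 14 * (x + y) + 19)) *
      (3 + (2 * x - 3 * y - 3) ^ 2 * (3 * (2 * x - 3 * y) ^ 2 + 2 * (2 * x - 3 * y) + 3)) := by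
  unfold goldsteinPrice
  ring

lemma goldsteinPrice_quadratic_pos_left (u : ℝ) : 0 < 3 * u ^ 2 - 14 * u + 19 := by
  nlinarith [sq_nonneg (3 * u - 7)]

lemma goldsteinPrice_quadratic_pos_right (v : ℝ) : 0 < 3 * v ^ 2 + 2 * v + 3 := by
  nlinarith [sq_nonneg (3 * v + 1)]

theorem stmt_7 :
    goldsteinPrice 0 (-1) = 3 ∧
    ∀ x y : ℝ, goldsteinPrice x y ≥ 3 ∧ (goldsteinPrice x y = 3 ↔ (x, y) = (0, -1)) := by
  refine ⟨by norm_num [goldsteinPrice], fun x y => ?_⟩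
  have hq₁ := goldsteinPrice_quadratic_pos_left (x + y)
  have hq₂ := goldsteinPrice_quadratic_pos_right (2 * x - 3 * y)
  have hA := le_add_sq_mul 1 (x + y + 1) hq₁.le
  have hB := le_add_sq_mul 3 (2 * x - 3 * y - 3) hq₂.le
  rw [goldsteinPrice_eq_mul, mul_eq_iff_of_one_le_of_le hA three_pos hB,
    add_sq_mul_eq_self_iff hq₁, add_sq_mul_eq_self_iff hq₂, Prod.mk.injEq]
  refine ⟨hB.trans (le_mul_of_one_le_left (zero_le_three.trans hB) hA), ?_⟩
  constructor <;> rintro ⟨h₁, h₂⟩ <;> constructor <;> linarith
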